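/- If b0·b1 is a factor of length 2 of the sequence π(w) (i.e., b0 = π(w[n]) and b1 = π(w[n+1]) for some n ≥ 0), then b0 joins with b1 with respect to (φ0, φ1): writing b0 = (v0, v1, s) and b1 = (w0, w1, t), one has |φ0(v0)| − s − |φ1(v1)| + t = 0. -/

import Mathlib

/-- The alphabet `A = {a, b, c}`. -/
inductive A : Type
  | a | b | c
deriving DecidableEq, Repr

/-- The substitution `φ0 : a ↦ abc, b ↦ a, c ↦ ac`. -/
def phi0 : A → List A
  | A.a => [A.a, A.b, A.c]
  | A.b => [A.a]
  | A.c => [A.a, A.c]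

/-- The substitution `φ1 : a ↦ cba, b ↦ a, c ↦ ca`. -/
def phi1 : A → List A
  | A.a => [A.c, A.b, A.a]
  | A.b => [A.a]
  | A.c => [A.c, A.a]

/-- The action of a morphism (given by its values on letters) on finite words. -/
def applyMorphism {α β : Type*} (φ : α → List β) (l : List α) : List β :=
  l.flatMap φ

/-- The prefix `u[:n]` of length `n` of an infinite word `u`. -/
def pref {α : Type*} (u : ℕ → α) (n : ℕ) : List α :=
  (List.range n).map u

/-- A finite word `l` is a prefix of the infinite word `u`. -/
def PrefixOfSeq {α : Type*} (l : List α) (u : ℕ → α) : Prop :=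
  ∀ i : ℕ, ∀ h : i < l.length, l.get ⟨i, h⟩ = u i

/-- The infinite word `u` is a (one-sided) fixed point of the substitution `φ`,
i.e. `φ(u) = u`: the image of every prefix of `u` is again a prefix of `u`. -/
def IsFixedPointOf {α : Type*} (φ : α → List α) (u : ℕ → α) : Prop :=
  ∀ n : ℕ, PrefixOfSeq (applyMorphism φ (pref u n)) u

/-- A brick over the alphabet `A`: an element of `A × A × ℤ`. -/
abbrev Brick : Type := A × A × ℤ

/-- The substitution `μ` over `C = {0, 1, …, 8}`. -/
def mu : Fin 9 → List (Fin 9)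
  | 0 => [0, 1]
  | 1 => [2, 3]
  | 2 => [4, 5]
  | 3 => [4, 1]
  | 4 => [2, 3, 1]
  | 5 => [2, 6]
  | 6 => [4, 7, 8]
  | 7 => [2]
  | 8 => [6, 6]

/-- The morphism `π : C → B(A)` sending each letter of `C` to a brick. -/
def piB : Fin 9 → Brick
  | 0 => (A.a, A.c, 0)
  | 1 => (A.b, A.a, -1)
  | 2 => (A.c, A.c, 1)
  | 3 => (A.a, A.b, 1)
  | 4 => (A.a, A.a, -1)
  | 5 => (A.c, A.c, -1)
  | 6 => (A.a, A.a, 1)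
  | 7 => (A.b, A.c, -1)
  | 8 => (A.c, A.b, 0)

/-- The brick `(v0, v1, s)` joins with the brick `(w0, w1, t)` with respect to
`(φ0, φ1)` if `|φ0(v0)| − s − |φ1(v1)| + t = 0`. -/
def Joins (b0 b1 : Brick) : Prop :=
  ((phi0 b0.1).length : ℤ) - b0.2.2 - ((phi1 b0.2.1).length : ℤ) + b1.2.2 = 0

/-!
Call a relation `R` on letters closed under a non-erasing substitution `φ` if every `φ(a)` is an
`R`-chain and `R a b` implies `R (last φ(a)) (first φ(b))`; then `φ` maps `R`-chains to `R`-chains.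
If `u = φ(u)` and `φ(u 0)` has length at least two, each prefix `u[:n+2]` is a prefix of
`φ(u[:n+1])`, so by induction every prefix of `u` is an `R`-chain. For `μ`, the fourteen pairs below
form such a relation, and each of them is checked to join.
-/

section Substitution

variable {α : Type*} {φ : α → List α}

theorem length_le_length_applyMorphism (hφ : ∀ a, φ a ≠ []) (l : List α) :
    l.length ≤ (applyMorphism φ l).length := by
  rw [applyMorphism, List.length_flatMap]
  simpa using List.length_le_sum_of_one_le (l.map fun a => (φ a).length)
    (by simpa [Nat.one_le_iff_ne_zero] using fun a _ => hφ a)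

theorem isChain_applyMorphism {R : α → α → Prop} (hφ : ∀ a, φ a ≠ [])
    (hinner : ∀ a, List.IsChain R (φ a))
    (hborder : ∀ a b, R a b → ∀ x ∈ (φ a).getLast?, ∀ y ∈ (φ b).head?, R x y)
    {l : List α} (hl : List.IsChain R l) : List.IsChain R (applyMorphism φ l) := by
  rw [applyMorphism, List.flatMap_def, List.isChain_flatten (by simp [hφ])]
  exact ⟨by simpa using fun a _ => hinner a, (List.isChain_map φ).2 (hl.imp hborder)⟩

theorem PrefixOfSeq.take_eq_pref {l : List α} {u : ℕ → α} (h : PrefixOfSeq l u) {n : ℕ}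
    (hn : n ≤ l.length) : l.take n = pref u n := by
  apply List.ext_getElem (by simp [pref, hn])
  intro i hi _
  simp only [List.length_take, lt_min_iff] at hi
  simpa [pref] using h i hi.2

theorem pref_succ (u : ℕ → α) (n : ℕ) :
    pref u (n + 1) = u 0 :: (List.range n).map (fun i => u (i + 1)) := by
  simp [pref, List.range_succ_eq_map, Function.comp_def]

theorem IsFixedPointOf.pref_eq_take {u : ℕ → α} (hu : IsFixedPointOf φ u)
    (hφ : ∀ a, φ a ≠ []) (h0 : 2 ≤ (φ (u 0)).length) (n : ℕ) :
    pref u (n + 2) = (applyMorphism φ (pref u (n + 1))).take (n + 2) := by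
  refine ((hu (n + 1)).take_eq_pref ?_).symm
  have := length_le_length_applyMorphism hφ ((List.range n).map fun i => u (i + 1))
  simp only [applyMorphism, pref_succ, List.flatMap_cons, List.length_append,
    List.length_map, List.length_range] at this ⊢
  omega

theorem IsFixedPointOf.rel_succ {u : ℕ → α} {R : α → α → Prop} (hu : IsFixedPointOf φ u)
    (hφ : ∀ a, φ a ≠ []) (h0 : 2 ≤ (φ (u 0)).length)
    (hinner : ∀ a, List.IsChain R (φ a))
    (hborder : ∀ a b, R a b → ∀ x ∈ (φ a).getLast?, ∀ y ∈ (φ b).head?, R x y) (n : ℕ) :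
    R (u n) (u (n + 1)) := by
  have hchain : ∀ m, List.IsChain R (pref u (m + 1)) := by
    intro m
    induction m with
    | zero => simp [pref]
    | succ m ih =>
      rw [hu.pref_eq_take hφ h0]
      exact (isChain_applyMorphism hφ hinner hborder ih).take _
  have := List.isChain_iff_getElem.1 (hchain (n + 1)) n (by simp [pref])
  simpa [pref] using this

end Substitution

/-- The closure of `{01}` under `μ`, i.e. the set of length-2 factors of `w`. -/
def goodPairs : List (Fin 9 × Fin 9) :=
  [(0,1),(1,2),(2,3),(2,6),(3,1),(3,4),(4,1),(4,5),(4,7),(5,4),(6,2),(6,6),(7,8),(8,4)]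

def Good (c d : Fin 9) : Prop := (c, d) ∈ goodPairs

instance (c d : Fin 9) : Decidable (Good c d) :=
  inferInstanceAs (Decidable ((c, d) ∈ goodPairs))

instance (b0 b1 : Brick) : Decidable (Joins b0 b1) :=
  inferInstanceAs (Decidable (_ = _))

theorem mu_ne_nil : ∀ c : Fin 9, mu c ≠ [] := by decide

theorem isChain_good_mu : ∀ c : Fin 9, List.IsChain Good (mu c) := by decide

theorem good_mu_border : ∀ c d : Fin 9, Good c d →
    ∀ x ∈ (mu c).getLast?, ∀ y ∈ (mu d).head?, Good x y := by decide

theorem Good.joins : ∀ {c d : Fin 9}, Good c d → Joins (piB c) (piB d) := by decide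

/-- Any two consecutive bricks of `π(w)` join one with another with respect to
`(φ0, φ1)`: for all `n ≥ 0`, `π(w[n])` joins with `π(w[n+1])`. -/
theorem consecutive_bricks_join
    (w : ℕ → Fin 9)
    (hw0 : w 0 = 0) (hfixw : IsFixedPointOf mu w) :
    ∀ n : ℕ, Joins (piB (w n)) (piB (w (n + 1))) := fun n =>
  (hfixw.rel_succ mu_ne_nil (by rw [hw0]; decide) isChain_good_mu good_mu_border n).joins
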